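/- The constant 1/2 in the inequality |∫_a^b f l| ≤ C(M−m)∫_a^b |l| is sharp: for any constant C such that the inequality |∫_a^b f(x) l(x) dx| ≤ C(M − m)∫_a^b |l(x)| dx holds for all bounded measurable f with m ≤ f ≤ M a.e. and all integrable l with ∫_a^b l = 0, one must have C ≥ 1/2. -/

import Mathlib

open MeasureTheory Set

theorem median_principle_half_sharp
    (a b : ℝ) (hab : a < b) (C : ℝ)
    (h : ∀ (f l : ℝ → ℝ) (m M : ℝ),
      Measurable f →
      (∀ᵐ x ∂volume, x ∈ Icc a b → m ≤ f x ∧ f x ≤ M) →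
      IntervalIntegrable l volume a b →
      (∫ x in a..b, l x) = 0 →
      |∫ x in a..b, f x * l x| ≤ C * (M - m) * ∫ x in a..b, |l x|) :
    (1 : ℝ) / 2 ≤ C := by
  set c : ℝ := (a + b) / 2 with hc
  set f : ℝ → ℝ := fun x => if x ≤ c then (-1 : ℝ) else 1 with hf
  have hac : a ≤ c := by simp [hc]; linarith
  have hcb : c ≤ b := by simp [hc]; linarith
  have hmeas : Measurable f := by
    apply Measurable.ite (measurableSet_le measurable_id measurable_const) <;>
      exact measurable_const
  have hbd : ∀ x, -1 ≤ f x ∧ f x ≤ 1 := by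
    intro x; by_cases hx : x ≤ c <;> simp [hf, hx]
  have hint : IntervalIntegrable f volume a b := by
    apply IntervalIntegrable.mono_fun' (g := fun _ => (1 : ℝ))
    · exact intervalIntegrable_const
    · exact hmeas.aestronglyMeasurable
    · filter_upwards with x
      rw [Real.norm_eq_abs, abs_le]
      exact hbd x
  have hIac : (∫ x in a..c, f x) = -(c - a) := by
    rw [intervalIntegral.integral_of_le hac,
      setIntegral_congr_fun measurableSet_Ioc
        (fun x hx => show f x = -1 by simp [hf, hx.2])]
    simp [Real.volume_Ioc, ENNReal.toReal_ofReal (by linarith : (0:ℝ) ≤ c - a)]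
    rw [max_eq_left (by linarith : (0:ℝ) ≤ c - a)]; ring
  have hIcb : (∫ x in c..b, f x) = b - c := by
    rw [intervalIntegral.integral_of_le hcb,
      setIntegral_congr_fun measurableSet_Ioc
        (fun x hx => show f x = 1 by simp [hf, not_le.mpr hx.1])]
    simp [Real.volume_Ioc, ENNReal.toReal_ofReal (by linarith : (0:ℝ) ≤ b - c)]
    exact hcb
  have hzero : (∫ x in a..b, f x) = 0 := by
    rw [← intervalIntegral.integral_add_adjacent_intervals
      (hint.mono_set (by rw [uIcc_of_le hac, uIcc_of_le (hac.trans hcb)]; exact Icc_subset_Icc le_rfl hcb))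
      (hint.mono_set (by rw [uIcc_of_le hcb, uIcc_of_le (hac.trans hcb)]; exact Icc_subset_Icc hac le_rfl)),
      hIac, hIcb]
    simp [hc]; ring
  have hsq : (∫ x in a..b, f x * f x) = b - a := by
    rw [intervalIntegral.integral_congr (g := fun _ => (1:ℝ))
      (fun x _ => by by_cases hx : x ≤ c <;> simp [hf, hx])]
    simp
  have habs : (∫ x in a..b, |f x|) = b - a := by
    rw [intervalIntegral.integral_congr (g := fun _ => (1:ℝ))
      (fun x _ => by by_cases hx : x ≤ c <;> simp [hf, hx])]
    simp
  have := h f f (-1) 1 hmeas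
    (Filter.Eventually.of_forall fun x _ => hbd x) hint hzero
  rw [hsq, habs] at this
  rw [abs_of_pos (by linarith)] at this
  nlinarith
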